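/- For any function f : Fin (N+1) → ℂ and any matrix g : Fin (N+1) × Fin N → ℂ, the sum over all permutations σ of {1,...,N+1} of sgn(σ) · f(σ(N+1)) · ∏_{j=1}^N g(σ(j), j) equals the value at α = 0 of (f(N+1) + ∂/∂α) applied to det_{1≤j,k≤N}(g(j,k) − α·f(j)·g(N+1,k)). Equivalently, ∑_{σ ∈ S_{N+1}} sgn(σ) f(σ(N+1)) ∏_{j=1}^N g(σ(j),j) = f(N+1)·det_{1≤j,k≤N}(g(j,k)) − ∑_{m=1}^N det of the matrix obtained from (g(j,k)) by replacing its m-th row-contribution with f(j)·g(N+1,k). -/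

import Mathlib

/-!
Write `A = (g(j,k))`, `u = (f(j))` and `v = (g(N+1,k))`, all indexed by `j, k ≤ N`. The left-hand
side is the determinant of the bordered matrix `[[A, u], [vᵀ, f(N+1)]]`, which is linear in its
last column: it equals `f(N+1) det A + det [[A, u], [vᵀ, 0]]`. On the other hand, subtracting
`α u_j` times the last row from row `j` turns `[[A, α u], [vᵀ, 1]]` into
`[[A - α u vᵀ, 0], [vᵀ, 1]]`, so `det (A - α u vᵀ) = det A + α det [[A, u], [vᵀ, 0]]` is affine in
`α`, and its derivative is the remaining bordered determinant.
-/

open scoped BigOperators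

namespace Matrix

variable {R : Type*} {n : ℕ}

/-- The block matrix `[[A, u], [vᵀ, d]]`. -/
def border (A : Matrix (Fin n) (Fin n) R) (u v : Fin n → R) (d : R) :
    Matrix (Fin (n + 1)) (Fin (n + 1)) R :=
  of fun i => Fin.snoc (α := fun _ => R)
    (Fin.snoc (α := fun _ => Fin n → R) (fun j => A j) v i) (Fin.snoc (α := fun _ => R) u d i)

lemma border_init_self (B : Fin (n + 1) → Fin n → R) (w : Fin (n + 1) → R) :
    border (of fun i => B i.castSucc) (fun i => w i.castSucc) (B (Fin.last n)) (w (Fin.last n)) =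
      of fun i => Fin.snoc (α := fun _ => R) (B i) (w i) := by
  ext i j
  induction i using Fin.lastCases <;> induction j using Fin.lastCases <;> simp [border]

section CommRing

variable [CommRing R] (A : Matrix (Fin n) (Fin n) R) (u v : Fin n → R) (d : R)

lemma det_border_eq_sum : (border A u v d).det =
    ∑ m : Fin n, (-1) ^ (m + n : ℕ) * u m *
      ((of (Fin.snoc (α := fun _ => Fin n → R) (fun j => A j) v)).submatrix m.castSucc.succAbove
        id).det + d * A.det := by
  have minor (r : Fin n → Fin (n + 1)) : (border A u v d).submatrix r Fin.castSucc =
      (of (Fin.snoc (α := fun _ => Fin n → R) (fun j => A j) v)).submatrix r id := by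
    ext; simp [border]
  have top_block :
      (of (Fin.snoc (α := fun _ => Fin n → R) (fun j => A j) v)).submatrix Fin.castSucc id = A := by
    ext; simp
  rw [det_succ_column _ (Fin.last n), Fin.sum_univ_castSucc]
  simp only [Fin.succAbove_last, minor, top_block]
  congr 1 <;> simp [border]

lemma det_border : (border A u v d).det = (border A u v 0).det + d * A.det := by
  simp [det_border_eq_sum]

lemma det_border_zero_left : (border A 0 v d).det = d * A.det := by
  simp [det_border_eq_sum]

lemma det_border_smul_left (c : R) : (border A (c • u) v 0).det = c * (border A u v 0).det := by
  simp only [det_border_eq_sum, Pi.smul_apply, smul_eq_mul, zero_mul, add_zero, Finset.mul_sum]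
  exact Finset.sum_congr rfl fun m _ => by ring

lemma det_sub_smul_vecMulVec (c : R) :
    (A - c • vecMulVec u v).det = A.det + c * (border A u v 0).det := by
  have row_reduce : (border A (c • u) v 1).det = (border (A - c • vecMulVec u v) 0 v 1).det := by
    refine det_eq_of_forall_row_eq_smul_add_const (Fin.snoc (α := fun _ => R) (c • u) 0)
      (Fin.last n) (by simp) fun i j => ?_
    induction i using Fin.lastCases <;> induction j using Fin.lastCases <;>
      simp only [border, of_apply, Fin.snoc_castSucc, Fin.snoc_last, Pi.smul_apply, smul_eq_mul,
        Pi.zero_apply, sub_apply, smul_apply, vecMulVec_apply, mul_one, zero_mul, add_zero,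
        zero_add]
    ring
  calc (A - c • vecMulVec u v).det = (border (A - c • vecMulVec u v) 0 v 1).det := by
        rw [det_border_zero_left, one_mul]
    _ = (border A (c • u) v 1).det := row_reduce.symm
    _ = A.det + c * (border A u v 0).det := by
        rw [det_border, det_border_smul_left, one_mul, add_comm]

end CommRing

lemma hasDerivAt_det_sub_smul_vecMulVec {𝕜 : Type*} [NontriviallyNormedField 𝕜]
    (A : Matrix (Fin n) (Fin n) 𝕜) (u v : Fin n → 𝕜) (c : 𝕜) :
    HasDerivAt (fun c => (A - c • vecMulVec u v).det) (border A u v 0).det c := by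
  simp_rw [det_sub_smul_vecMulVec]
  simpa using ((hasDerivAt_id c).mul_const (border A u v 0).det).const_add A.det

end Matrix

open Matrix in
theorem stmt0 (N : ℕ) (f : Fin (N + 1) → ℂ) (g : Fin (N + 1) × Fin N → ℂ) :
    ∑ σ : Equiv.Perm (Fin (N + 1)),
        ((Equiv.Perm.sign σ : ℤ) : ℂ) * f (σ (Fin.last N)) *
          ∏ j : Fin N, g (σ j.castSucc, j)
    = f (Fin.last N) *
        Matrix.det (Matrix.of fun j k : Fin N => g (j.castSucc, k))
      + deriv (fun α : ℂ =>
          Matrix.det (Matrix.of fun j k : Fin N =>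
            g (j.castSucc, k) - α * f j.castSucc * g (Fin.last N, k))) 0 := by
  set A := of fun j k : Fin N => g (j.castSucc, k)
  set u := fun j : Fin N => f j.castSucc
  set v := fun k : Fin N => g (Fin.last N, k)
  have lhs : ∑ σ : Equiv.Perm (Fin (N + 1)), ((Equiv.Perm.sign σ : ℤ) : ℂ) * f (σ (Fin.last N)) *
      ∏ j : Fin N, g (σ j.castSucc, j) = (border A u v (f (Fin.last N))).det := by
    rw [border_init_self (fun i k => g (i, k)), det_apply']
    refine Finset.sum_congr rfl fun σ _ => ?_
    simp only [of_apply, Fin.prod_univ_castSucc, Fin.snoc_castSucc, Fin.snoc_last]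
    ring
  have rank_one_perturbation : (fun α : ℂ => (of fun j k : Fin N =>
      g (j.castSucc, k) - α * f j.castSucc * g (Fin.last N, k)).det) =
        fun α => (A - α • vecMulVec u v).det := by
    funext α
    congr 1
    ext j k
    simp [A, u, v, vecMulVec_apply, mul_assoc]
  rw [lhs, rank_one_perturbation, (hasDerivAt_det_sub_smul_vecMulVec A u v 0).deriv, det_border,
    add_comm]
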